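/- Let N ≥ 1, let n_1, …, n_N and m be natural numbers, and let A be the real symmetric matrix of size (n_1+…+n_N+m) whose block structure is: diagonal blocks D_1, …, D_N (with D_i of size n_i×n_i), zero blocks between distinct inner index blocks i ≠ j, coupling blocks B_i (of size n_i×m) between the i-th inner block and the last (boundary) block, and boundary diagonal block C (of size m×m); that is, A = [[D_1, 0, …, 0, B_1], [0, D_2, …, 0, B_2], …, [0, 0, …, D_N, B_N], [B_1ᵀ, B_2ᵀ, …, B_Nᵀ, C]]. If A is symmetric positive definite, then there exist real symmetric m×m matrices C_1, …, C_N with C_1 + … + C_N = C such that each block matrix [[D_i, B_i], [B_iᵀ, C_i]] is symmetric positive definite. -/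

import Mathlib

/-!
Let `S = C - ∑ i, Bᵢᵀ Dᵢ⁻¹ Bᵢ`. Since `D = blockDiagonal' Dᵢ` has inverse `blockDiagonal' Dᵢ⁻¹`,
`S` is the Schur complement of `D` in `A`, hence positive definite. Put `Cᵢ = Bᵢᵀ Dᵢ⁻¹ Bᵢ + S / N`:
these add up to `C`, and the Schur complement of `Dᵢ` in `[[Dᵢ, Bᵢ], [Bᵢᵀ, Cᵢ]]` is `S / N`, so each
block is positive definite as well.
-/

open Matrix

namespace Matrix

section BlockDiagonal

variable {α ι l r : Type*} {p q : ι → Type*} [Fintype ι] [DecidableEq ι]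

theorem mul_blockDiagonal'_mul [CommSemiring α] [∀ i, Fintype (p i)] [∀ i, Fintype (q i)]
    (X : Matrix l (Σ i, p i) α) (M : ∀ i, Matrix (p i) (q i) α) (Y : Matrix (Σ i, q i) r α) :
    X * blockDiagonal' M * Y =
      ∑ i, X.submatrix id (Sigma.mk i) * M i * Y.submatrix (Sigma.mk i) id := by
  ext a c
  simp [mul_apply, Matrix.sum_apply, Fintype.sum_sigma, blockDiagonal'_apply, Finset.sum_mul]

theorem blockDiagonal'_inv [Field α] [∀ i, Fintype (p i)] [∀ i, DecidableEq (p i)]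
    {M : ∀ i, Matrix (p i) (p i) α} (hM : ∀ i, IsUnit (M i)) :
    (blockDiagonal' M)⁻¹ = blockDiagonal' fun i => (M i)⁻¹ := by
  refine inv_eq_right_inv ?_
  rw [← blockDiagonal'_mul, ← blockDiagonal'_one]
  congr 1
  funext i
  exact mul_nonsing_inv _ ((isUnit_iff_isUnit_det _).mp (hM i))

end BlockDiagonal

section PosDef

variable {R : Type*} [Ring R] [PartialOrder R] [StarRing R]

theorem PosDef.of_fromBlocks {m n : Type*} {A : Matrix m m R} {B : Matrix m n R}
    {C : Matrix n m R} {D : Matrix n n R} (h : (fromBlocks A B C D).PosDef) : A.PosDef :=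
  h.submatrix Sum.inl_injective

theorem PosDef.of_blockDiagonal' {ι : Type*} {p : ι → Type*} [DecidableEq ι]
    {M : ∀ i, Matrix (p i) (p i) R} (h : (blockDiagonal' M).PosDef) (i : ι) : (M i).PosDef := by
  convert h.submatrix (sigma_mk_injective (i := i)) using 1
  ext a b
  simp [blockDiagonal'_apply]

end PosDef

open scoped ComplexOrder in
/-- The strict counterpart of `Matrix.PosDef.fromBlocks₁₁`: positive definiteness is positive
semidefiniteness plus invertibility, and `det (fromBlocks A B Bᴴ D) = det A * det (D - Bᴴ A⁻¹ B)`. -/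
theorem posDef_fromBlocks₁₁_iff {𝕜 m n : Type*} [RCLike 𝕜] [Fintype m] [Fintype n]
    [DecidableEq m] [DecidableEq n] {A : Matrix m m 𝕜} (B : Matrix m n 𝕜) (D : Matrix n n 𝕜)
    (hA : A.PosDef) : (fromBlocks A B Bᴴ D).PosDef ↔ (D - Bᴴ * A⁻¹ * B).PosDef := by
  let := hA.isUnit.invertible
  have hunit : IsUnit (fromBlocks A B Bᴴ D) ↔ IsUnit (D - Bᴴ * A⁻¹ * B) := by
    simp only [isUnit_iff_isUnit_det, det_fromBlocks₁₁, invOf_eq_nonsing_inv, IsUnit.mul_iff,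
      (isUnit_iff_isUnit_det A).1 hA.isUnit, true_and]
  have hsemi := PosDef.fromBlocks₁₁ B D hA
  exact ⟨fun h => (hsemi.1 h.posSemidef).posDef_iff_isUnit.2 (hunit.1 h.isUnit),
    fun h => (hsemi.2 h.posSemidef).posDef_iff_isUnit.2 (hunit.2 h.isUnit)⟩

end Matrix

theorem conformal_splitting_existence (N : ℕ) (hN : 1 ≤ N)
    (n : Fin N → ℕ) (m : ℕ)
    (D : ∀ i : Fin N, Matrix (Fin (n i)) (Fin (n i)) ℝ)
    (B : ∀ i : Fin N, Matrix (Fin (n i)) (Fin m) ℝ)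
    (C : Matrix (Fin m) (Fin m) ℝ)
    (hA : (fromBlocks (blockDiagonal' D)
        (Matrix.of fun (p : Σ i : Fin N, Fin (n i)) (j : Fin m) => B p.1 p.2 j)
        (Matrix.of fun (p : Σ i : Fin N, Fin (n i)) (j : Fin m) => B p.1 p.2 j)ᵀ
        C).PosDef) :
    ∃ Cs : Fin N → Matrix (Fin m) (Fin m) ℝ,
      (∀ i, (Cs i)ᵀ = Cs i) ∧ (∑ i, Cs i) = C ∧
      ∀ i, (fromBlocks (D i) (B i) (B i)ᵀ (Cs i)).PosDef := by
  simp only [← conjTranspose_eq_transpose_of_trivial] at hA ⊢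
  have hD : ∀ i, (D i).PosDef := hA.of_fromBlocks.of_blockDiagonal'
  set S := C - ∑ i, (B i)ᴴ * (D i)⁻¹ * B i
  have hS : S.PosDef := by
    rwa [posDef_fromBlocks₁₁_iff _ _ hA.of_fromBlocks, blockDiagonal'_inv fun i => (hD i).isUnit,
      mul_blockDiagonal'_mul] at hA
  have hNpos : (0 : ℝ) < N := by exact_mod_cast hN
  have hpos : ∀ i,
      (fromBlocks (D i) (B i) (B i)ᴴ ((B i)ᴴ * (D i)⁻¹ * B i + (N : ℝ)⁻¹ • S)).PosDef :=
    fun i => (posDef_fromBlocks₁₁_iff _ _ (hD i)).2 (by simpa using hS.smul (inv_pos.2 hNpos))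
  refine ⟨fun i => (B i)ᴴ * (D i)⁻¹ * B i + (N : ℝ)⁻¹ • S, fun i => ?_, ?_, hpos⟩
  · exact (isHermitian_fromBlocks_iff.1 (hpos i).isHermitian).2.2.2
  · rw [Finset.sum_add_distrib, Finset.sum_const, Finset.card_univ, Fintype.card_fin,
      ← Nat.cast_smul_eq_nsmul ℝ, smul_smul, mul_inv_cancel₀ hNpos.ne', one_smul]
    exact add_sub_cancel _ _
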